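/- Let $c \in (0,1]$ and let $r \ge 1$ and $\sigma_1 > \dots > \sigma_r > c^{1/4}$. For the weighted spectral estimator with limiting SURE value $S(w) = \sum_{k=1}^r \left[\rho(\sigma_k)^2 (w_k - 1)^2 + 2 w_k \frac{\sigma_k^2(1+c)+2c}{\sigma_k^2}\right]$, the unique global minimizer over $w \in \mathbb{R}^r$ is $w_k^\ast = 1 - \frac{\sigma_k^2(1+c)+2c}{\sigma_k^2 \rho(\sigma_k)^2}$ for each $k$, and each $w_k^\ast$ lies in $(0,1)$. -/

import Mathlib

open Real

/-- The spiked-model map from a population singular value to the asymptotic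
location of the corresponding empirical singular value. -/
noncomputable def rho (c σ : ℝ) : ℝ :=
  Real.sqrt ((1 + σ ^ 2) * (c + σ ^ 2) / σ ^ 2)

/-! Expanding `ρ(σ)² = (1 + σ²)(c + σ²)/σ²`, the optimal weight is `1 - B/D` with
`B = σ²(1 + c) + 2c` and `D = σ⁴ + σ²(1 + c) + c`, so `0 < w⋆ < 1` amounts to `c < σ⁴`.
The criterion is a sum of one-dimensional quadratics `ρ²(w - 1)² + 2wb` with positive
leading coefficient, each uniquely minimized at `1 - b/ρ²`, hence the sum is uniquely
minimized coordinatewise. -/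

theorem Finset.sum_lt_sum_of_isStrictMinimizer {ι M : Type*} [Fintype ι] [AddCommMonoid M]
    [PartialOrder M] [IsOrderedCancelAddMonoid M] {f : ι → ℝ → M} {x : ι → ℝ}
    (hmin : ∀ i y, y ≠ x i → f i (x i) < f i y) {w : ι → ℝ} (hw : w ≠ x) :
    ∑ i, f i (x i) < ∑ i, f i (w i) := by
  obtain ⟨j, hj⟩ := Function.ne_iff.mp hw
  refine Finset.sum_lt_sum (fun i _ => ?_) ⟨j, Finset.mem_univ j, hmin j (w j) hj⟩
  rcases eq_or_ne (w i) (x i) with h | h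
  · rw [h]
  · exact (hmin i (w i) h).le

theorem quadratic_lt_of_ne_vertex {a b x : ℝ} (ha : 0 < a) (hx : x ≠ 1 - b / a) :
    a * (1 - b / a - 1) ^ 2 + 2 * (1 - b / a) * b < a * (x - 1) ^ 2 + 2 * x * b := by
  have hsplit : a * (x - 1) ^ 2 + 2 * x * b
      = a * (1 - b / a - 1) ^ 2 + 2 * (1 - b / a) * b + a * (x - (1 - b / a)) ^ 2 := by
    field_simp
    ring
  rw [hsplit, lt_add_iff_pos_right]
  exact mul_pos ha (pow_two_pos_of_ne_zero (sub_ne_zero.mpr hx))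

theorem lt_pow_of_rpow_inv_natCast_lt {x y : ℝ} {n : ℕ} (hx : 0 ≤ x) (hn : n ≠ 0)
    (h : x ^ (n⁻¹ : ℝ) < y) : x < y ^ n := by
  have hroot : 0 ≤ x ^ (n⁻¹ : ℝ) := rpow_nonneg hx _
  calc x = (x ^ (n⁻¹ : ℝ)) ^ n := (rpow_inv_natCast_pow hx hn).symm
    _ < y ^ n := pow_lt_pow_left₀ h hroot hn

theorem rho_pos {c σ : ℝ} (hc : 0 ≤ c) (hσ : σ ≠ 0) : 0 < rho c σ :=
  sqrt_pos.mpr (by positivity)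

theorem sq_mul_rho_sq {c σ : ℝ} (hc : 0 ≤ c) (hσ : σ ≠ 0) :
    σ ^ 2 * rho c σ ^ 2 = (1 + σ ^ 2) * (c + σ ^ 2) := by
  rw [rho, sq_sqrt (by positivity)]
  field_simp

theorem one_sub_div_mul_rho_sq_mem_Ioo {c σ : ℝ} (hc : 0 ≤ c) (hσ4 : c < σ ^ 4) :
    1 - (σ ^ 2 * (1 + c) + 2 * c) / (σ ^ 2 * rho c σ ^ 2) ∈ Set.Ioo (0 : ℝ) 1 := by
  have hσ0 : σ ≠ 0 := ne_zero_pow four_ne_zero (hc.trans_lt hσ4).ne'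
  have hB : 0 < σ ^ 2 * (1 + c) + 2 * c := by positivity
  have hBD : σ ^ 2 * (1 + c) + 2 * c < σ ^ 2 * rho c σ ^ 2 := by
    rw [sq_mul_rho_sq hc hσ0]
    nlinarith
  refine ⟨sub_pos.mpr ((div_lt_one (hB.trans hBD)).mpr hBD), sub_lt_self 1 ?_⟩
  exact div_pos hB (hB.trans hBD)

noncomputable def sureTerm (c σ w : ℝ) : ℝ :=
  rho c σ ^ 2 * (w - 1) ^ 2 + 2 * w * ((σ ^ 2 * (1 + c) + 2 * c) / σ ^ 2)

theorem limiting_sure_global_minimizer_general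
    (c : ℝ) (hc : c ∈ Set.Ioc (0 : ℝ) 1)
    (r : ℕ) (σ : Fin r → ℝ)
    (hσ : ∀ k, c ^ ((1 : ℝ) / 4) < σ k)
    (S : (Fin r → ℝ) → ℝ)
    (hS : S = fun w => ∑ k, ((rho c (σ k)) ^ 2 * (w k - 1) ^ 2
        + 2 * w k * ((σ k ^ 2 * (1 + c) + 2 * c) / σ k ^ 2)))
    (wstar : Fin r → ℝ)
    (hw : wstar = fun k =>
        1 - (σ k ^ 2 * (1 + c) + 2 * c) / (σ k ^ 2 * (rho c (σ k)) ^ 2)) :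
    (∀ k, wstar k ∈ Set.Ioo (0 : ℝ) 1) ∧
    (∀ w : Fin r → ℝ, w ≠ wstar → S wstar < S w) := by
  have hc0 : 0 ≤ c := hc.1.le
  have hσ4 : ∀ k, c < σ k ^ 4 := fun k =>
    lt_pow_of_rpow_inv_natCast_lt hc0 four_ne_zero (by simpa [one_div] using hσ k)
  subst hS hw
  refine ⟨fun k => one_sub_div_mul_rho_sq_mem_Ioo hc0 (hσ4 k), fun w hne => ?_⟩
  refine Finset.sum_lt_sum_of_isStrictMinimizer (f := fun k => sureTerm c (σ k))
    (fun k y hy => ?_) hne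
  have hρ : 0 < rho c (σ k) ^ 2 :=
    pow_pos (rho_pos hc0 (ne_zero_pow four_ne_zero (hc0.trans_lt (hσ4 k)).ne')) 2
  rw [← div_div] at hy
  simpa only [sureTerm, div_div] using quadratic_lt_of_ne_vertex hρ hy

/-- The limiting SURE criterion for weighted spectral estimators is uniquely
minimized over `ℝ^r` at `w⋆ₖ = 1 - (σₖ²(1+c)+2c)/(σₖ²ρ(σₖ)²)`, and each
optimal weight lies in `(0,1)`. -/
theorem limiting_sure_global_minimizer
    (c : ℝ) (hc : c ∈ Set.Ioc (0 : ℝ) 1)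
    (r : ℕ) (hr : 1 ≤ r) (σ : Fin r → ℝ)
    (hσdec : StrictAnti σ) (hσ : ∀ k, c ^ ((1 : ℝ) / 4) < σ k)
    (S : (Fin r → ℝ) → ℝ)
    (hS : S = fun w => ∑ k, ((rho c (σ k)) ^ 2 * (w k - 1) ^ 2
        + 2 * w k * ((σ k ^ 2 * (1 + c) + 2 * c) / σ k ^ 2)))
    (wstar : Fin r → ℝ)
    (hw : wstar = fun k =>
        1 - (σ k ^ 2 * (1 + c) + 2 * c) / (σ k ^ 2 * (rho c (σ k)) ^ 2)) :
    (∀ k, wstar k ∈ Set.Ioo (0 : ℝ) 1) ∧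
    (∀ w : Fin r → ℝ, w ≠ wstar → S wstar < S w) :=
  limiting_sure_global_minimizer_general c hc r σ hσ S hS wstar hw
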